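/- For every ε > 0 and t ∈ ℝ, the quotient |φ⁻¹(ε + it) − φ⁻¹(it)| / (1 − |φ⁻¹(ε + it)|) equals (√((1+ε)² + t²) + √((1−ε)² + t²)) / (2√(1 + t²)), where φ⁻¹(w) = (w−1)/(w+1) is the inverse Cayley transform. -/

import Mathlib

/-!
For `w = ε + it`, both `φ⁻¹(w) - φ⁻¹(it) = 2ε / ((w + 1)(it + 1))` and
`1 - |φ⁻¹(w)| = (|w + 1| - |w - 1|) / |w + 1|` are explicit, and the polarization identity
`|w + 1|² - |w - 1|² = 4 Re w = 4ε` turns `2ε / (|w + 1| - |w - 1|)` into `(|w + 1| + |w - 1|) / 2`.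
-/

/-- The inverse Cayley transform. -/
noncomputable def cayleyInv (w : ℂ) : ℂ := (w - 1) / (w + 1)

open Complex

theorem cayleyInv_sub_cayleyInv {z w : ℂ} (hz : z + 1 ≠ 0) (hw : w + 1 ≠ 0) :
    cayleyInv z - cayleyInv w = 2 * (z - w) / ((z + 1) * (w + 1)) := by
  unfold cayleyInv
  field_simp
  ring

theorem norm_cayleyInv (w : ℂ) : ‖cayleyInv w‖ = ‖w - 1‖ / ‖w + 1‖ :=
  norm_div _ _

theorem sq_norm_add_one_sub_sq_norm_sub_one (w : ℂ) :
    ‖w + 1‖ ^ 2 - ‖w - 1‖ ^ 2 = 4 * w.re := by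
  simp only [Complex.sq_norm, normSq_apply, add_re, sub_re, add_im, sub_im, one_re, one_im]
  ring

theorem add_one_ne_zero_of_re_nonneg {w : ℂ} (hw : 0 ≤ w.re) : w + 1 ≠ 0 := by
  intro h
  have := congrArg re h
  simp only [add_re, one_re, zero_re] at this
  linarith

theorem div_div_one_sub_div_of_sq_sub_sq {a b c : ℝ} (ha : a ≠ 0) (hab : a ≠ b) (hc : c ≠ 0) :
    (a ^ 2 - b ^ 2) / (2 * (a * c)) / (1 - b / a) = (a + b) / (2 * c) := by
  have hab' : a - b ≠ 0 := sub_ne_zero.mpr hab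
  field_simp
  ring

/-- Explicit formula for the Stolz-type quotient of the inverse Cayley transform. -/
theorem cayleyInv_stolz_quotient (ε t : ℝ) (hε : 0 < ε) :
    ‖cayleyInv (ε + t * Complex.I) - cayleyInv (t * Complex.I)‖ /
      (1 - ‖cayleyInv (ε + t * Complex.I)‖) =
    (Real.sqrt ((1 + ε) ^ 2 + t ^ 2) + Real.sqrt ((1 - ε) ^ 2 + t ^ 2)) /
      (2 * Real.sqrt (1 + t ^ 2)) := by
  set w : ℂ := ε + t * I
  have hw_re : w.re = ε := by simp [w]
  have hw : w + 1 ≠ 0 := add_one_ne_zero_of_re_nonneg (hw_re ▸ hε.le)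
  have hit : t * I + 1 ≠ 0 := add_one_ne_zero_of_re_nonneg (by simp)
  have h_plus : ‖w + 1‖ = √((1 + ε) ^ 2 + t ^ 2) := by
    rw [← norm_add_mul_I]; congr 1; push_cast [w]; ring
  have h_minus : ‖w - 1‖ = √((1 - ε) ^ 2 + t ^ 2) := by
    rw [show (1 - ε) ^ 2 = (ε - 1) ^ 2 by ring, ← norm_add_mul_I]; congr 1; push_cast [w]; ring
  have h_axis : ‖t * I + 1‖ = √(1 + t ^ 2) := by
    rw [show 1 + t ^ 2 = (1 : ℝ) ^ 2 + t ^ 2 by ring, ← norm_add_mul_I]; congr 1; push_cast; ring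
  have h_diff : ‖cayleyInv w - cayleyInv (t * I)‖ =
      (‖w + 1‖ ^ 2 - ‖w - 1‖ ^ 2) / (2 * (‖w + 1‖ * ‖t * I + 1‖)) := by
    rw [cayleyInv_sub_cayleyInv hw hit, sq_norm_add_one_sub_sq_norm_sub_one, hw_re,
      norm_div, norm_mul, norm_mul, show w - t * I = ε by simp [w]]
    simp only [norm_ofNat, norm_real, Real.norm_eq_abs, abs_of_pos hε]
    ring
  have h_ne : ‖w + 1‖ ≠ ‖w - 1‖ := by
    intro h
    have := sq_norm_add_one_sub_sq_norm_sub_one w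
    rw [h, hw_re] at this
    linarith
  rw [h_diff, norm_cayleyInv, div_div_one_sub_div_of_sq_sub_sq (norm_ne_zero_iff.mpr hw) h_ne
    (norm_ne_zero_iff.mpr hit), h_plus, h_minus, h_axis]
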